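/- arXiv:2005.13752 — 2 statements merged into one kernel-verified Lean document; each statement's English description precedes it below -/
import Mathlib

section
/- For all probability measures m, φ, θ on G, one has Δ(m, φ * θ) ≤ Δ(m * φ, θ) + Δ(φ, θ), i.e., ∫_G ‖g(φ * θ) − φ * θ‖ dm(g) ≤ ∫_G ‖gθ − θ‖ d(m * φ)(g) + ∫_G ‖gθ − θ‖ dφ(g). -/
open MeasureTheory Filter Topology

/-- Total variation norm `‖μ − ν‖` of the difference of two finite measures. -/
noncomputable def tv {α : Type*} [MeasurableSpace α] (μ ν : Measure α) : ℝ :=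
  ((μ - ν) Set.univ + (ν - μ) Set.univ).toReal

/-- Pushforward `gμ` of a measure on `G` under the left translation `h ↦ g * h`. -/
noncomputable def ltrans {G : Type*} [MeasurableSpace G] [Mul G] (g : G) (μ : Measure G) :
    Measure G :=
  μ.map (fun h => g * h)

/-- Convolution `α * β` of measures on `G`: the pushforward of `α ⊗ β` under
`(g, h) ↦ g * h`. -/
noncomputable def mconv {G : Type*} [MeasurableSpace G] [Mul G] (μ ν : Measure G) : Measure G :=
  (μ.prod ν).map (fun p : G × G => p.1 * p.2)

/-- `convPow θ k = θ^{*k}`, the `k`-th convolution power of `θ` (with `θ^{*0} = δ_1`). -/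
noncomputable def convPow {G : Type*} [MeasurableSpace G] [Monoid G] (θ : Measure G) :
    ℕ → Measure G
  | 0 => Measure.dirac 1
  | (k + 1) => mconv θ (convPow θ k)

/-- Mean discrepancy `Δ(m, θ) = ∫_G ‖gθ − θ‖ dm(g)`. -/
noncomputable def disc {G : Type*} [MeasurableSpace G] [Mul G] (m θ : Measure G) : ℝ :=
  ∫ g, tv (ltrans g θ) θ ∂m

/-!
For finite measures, `(μ - ν) univ = ⨆ s, μ s - ν s` (Hahn decomposition). This makes the
total variation satisfy the triangle inequality and be convex under mixtures:
`‖∫ κ h dα(h) - ν‖ ≤ ∫ ‖κ h - ν‖ dα(h)`. As `g(φ * θ) = (gφ) * θ` and `φ * θ = ∫ hθ dφ(h)`,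
`‖g(φ * θ) - φ * θ‖ ≤ ‖(gφ) * θ - θ‖ + ‖θ - φ * θ‖ ≤ ∫ ‖ghθ - θ‖ dφ(h) + Δ(φ, θ)`,
and integrating in `g` against `m` turns the first term into `Δ(m * φ, θ)`.
The integrands are measurable because on a countably generated space the supremum may be taken
over a countable generating algebra of sets, which approximates every measurable set.
-/

open Set MeasurableSpace
open scoped ENNReal symmDiff

namespace MeasureTheory.Measure

variable {α β : Type*} [MeasurableSpace α] [MeasurableSpace β]

lemma sub_apply_univ_eq_of_isHahnDecomposition {μ ν : Measure α} [IsFiniteMeasure ν] {s : Set α}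
    (hs : IsHahnDecomposition μ ν s) : (μ - ν) univ = μ sᶜ - ν sᶜ := by
  rw [← measure_add_measure_compl hs.measurableSet, sub_apply_eq_zero_of_isHahnDecomposition hs,
    zero_add, ← restrict_apply_univ, restrict_sub_eq_restrict_sub_restrict hs.measurableSet.compl,
    sub_apply .univ hs.ge_on_compl, restrict_apply_univ, restrict_apply_univ]

lemma sub_apply_univ_le_iff {μ ν : Measure α} [IsFiniteMeasure μ] [IsFiniteMeasure ν]
    {c : ℝ≥0∞} : (μ - ν) univ ≤ c ↔ ∀ s, MeasurableSet s → μ s ≤ c + ν s := by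
  refine ⟨fun h s hs => ?_, fun h => ?_⟩
  · calc μ s ≤ (μ - ν) s + ν s := sub_le_iff_le_add.mp le_rfl s
      _ ≤ c + ν s := by gcongr; exact (measure_mono (subset_univ s)).trans h
  · obtain ⟨s, hs⟩ := exists_isHahnDecomposition μ ν
    rw [sub_apply_univ_eq_of_isHahnDecomposition hs, tsub_le_iff_right]
    exact h _ hs.measurableSet.compl

lemma apply_le_sub_apply_univ_add (μ ν : Measure α) [IsFiniteMeasure μ] [IsFiniteMeasure ν]
    {s : Set α} (hs : MeasurableSet s) : μ s ≤ (μ - ν) univ + ν s :=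
  sub_apply_univ_le_iff.mp le_rfl s hs

lemma sub_apply_univ_le_sub_apply_univ_add (μ ν ξ : Measure α) [IsFiniteMeasure μ]
    [IsFiniteMeasure ν] [IsFiniteMeasure ξ] : (μ - ξ) univ ≤ (μ - ν) univ + (ν - ξ) univ := by
  refine sub_apply_univ_le_iff.mpr fun s hs => ?_
  calc μ s ≤ (μ - ν) univ + ν s := apply_le_sub_apply_univ_add μ ν hs
    _ ≤ (μ - ν) univ + ((ν - ξ) univ + ξ s) := by gcongr; exact apply_le_sub_apply_univ_add ν ξ hs
    _ = _ := (add_assoc _ _ _).symm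

lemma measurableSet_of_mem_generateSetAlgebra {𝒜 : Set (Set α)}
    (h𝒜 : ∀ s ∈ 𝒜, MeasurableSet s) {s : Set α} (hs : s ∈ generateSetAlgebra 𝒜) :
    MeasurableSet s :=
  IsSetAlgebra.generateSetAlgebra_subset (ℬ := {s | MeasurableSet s}) h𝒜
    ⟨.empty, fun _ => .compl, fun _ _ => .union⟩ hs

lemma sub_apply_univ_eq_iSup [CountablyGenerated α] (μ ν : Measure α) [IsFiniteMeasure μ]
    [IsFiniteMeasure ν] :
    (μ - ν) univ = ⨆ A : generateSetAlgebra (countableGeneratingSet α), μ A - ν A := by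
  set S := ⨆ A : generateSetAlgebra (countableGeneratingSet α), μ A - ν A
  have hgen : generateFrom (generateSetAlgebra (countableGeneratingSet α)) = ‹MeasurableSpace α› :=
    by rw [generateFrom_generateSetAlgebra_eq, generateFrom_countableGeneratingSet]
  refine le_antisymm (sub_apply_univ_le_iff.mpr fun s hs => ?_) (iSup_le fun A => ?_)
  · refine ENNReal.le_of_forall_pos_le_add fun ε hε _ => ?_
    obtain ⟨A, hA, hAs⟩ := exists_measure_symmDiff_lt_of_generateFrom_isSetRing (μ := μ + ν)
      isSetAlgebra_generateSetAlgebra.isSetRing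
      ⟨{univ}, countable_singleton _,
        singleton_subset_iff.mpr isSetAlgebra_generateSetAlgebra.univ_mem, by simp⟩
      hgen.symm hs (ENNReal.coe_pos.mpr hε)
    have hμ : μ s ≤ μ A + μ (s ∆ A) := tsub_le_iff_left.mp le_measure_symmDiff
    have hS : μ A ≤ S + ν A :=
      tsub_le_iff_right.mp (le_iSup (fun A : generateSetAlgebra _ => μ A - ν A) ⟨A, hA⟩)
    have hν : ν A ≤ ν s + ν (A ∆ s) := tsub_le_iff_left.mp le_measure_symmDiff
    calc μ s ≤ S + (ν s + ν (A ∆ s)) + μ (s ∆ A) :=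
          hμ.trans (by gcongr; exact hS.trans (by gcongr))
      _ = S + ν s + (μ + ν) (A ∆ s) := by rw [symmDiff_comm, add_apply]; ring
      _ ≤ S + ν s + ε := by gcongr
  · exact tsub_le_iff_right.mpr (apply_le_sub_apply_univ_add μ ν
      (measurableSet_of_mem_generateSetAlgebra (fun _ => measurableSet_countableGeneratingSet) A.2))

lemma bind_sub_apply_univ_le (ρ : Measure β) [IsProbabilityMeasure ρ] {κ : β → Measure α}
    [∀ b, IsProbabilityMeasure (κ b)] (hκ : Measurable κ) (ν : Measure α) [IsFiniteMeasure ν] :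
    (ρ.bind κ - ν) univ ≤ ∫⁻ b, (κ b - ν) univ ∂ρ := by
  have := isProbabilityMeasure_bind hκ.aemeasurable (ae_of_all ρ fun b => inferInstance)
  refine sub_apply_univ_le_iff.mpr fun s hs => ?_
  calc ρ.bind κ s = ∫⁻ b, κ b s ∂ρ := bind_apply hs hκ.aemeasurable
    _ ≤ ∫⁻ b, ((κ b - ν) univ + ν s) ∂ρ :=
        lintegral_mono fun b => apply_le_sub_apply_univ_add _ _ hs
    _ = ∫⁻ b, (κ b - ν) univ ∂ρ + ν s := by
        rw [lintegral_add_right _ measurable_const, lintegral_const, measure_univ, mul_one]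

lemma sub_bind_apply_univ_le (ρ : Measure β) [IsProbabilityMeasure ρ] {κ : β → Measure α}
    [∀ b, IsProbabilityMeasure (κ b)] (hκ : Measurable κ) (ν : Measure α) [IsFiniteMeasure ν] :
    (ν - ρ.bind κ) univ ≤ ∫⁻ b, (ν - κ b) univ ∂ρ := by
  have := isProbabilityMeasure_bind hκ.aemeasurable (ae_of_all ρ fun b => inferInstance)
  refine sub_apply_univ_le_iff.mpr fun s hs => ?_
  have hκs : Measurable fun b => κ b s := (measurable_coe hs).comp hκ
  calc ν s = ∫⁻ _, ν s ∂ρ := by rw [lintegral_const, measure_univ, mul_one]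
    _ ≤ ∫⁻ b, ((ν - κ b) univ + κ b s) ∂ρ :=
        lintegral_mono fun b => apply_le_sub_apply_univ_add _ _ hs
    _ = ∫⁻ b, (ν - κ b) univ ∂ρ + ρ.bind κ s := by
        rw [lintegral_add_right _ hκs, bind_apply hs hκ.aemeasurable]

end MeasureTheory.Measure

/-- `tv μ ν = (etv μ ν).toReal` holds by `rfl`. -/
noncomputable def etv {α : Type*} [MeasurableSpace α] (μ ν : Measure α) : ℝ≥0∞ :=
  (μ - ν) univ + (ν - μ) univ

section etv

variable {α β : Type*} [MeasurableSpace α] [MeasurableSpace β]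

lemma etv_comm (μ ν : Measure α) : etv μ ν = etv ν μ := add_comm _ _

lemma etv_le_add (μ ν : Measure α) : etv μ ν ≤ μ univ + ν univ :=
  add_le_add (Measure.sub_le (μ := μ) (ν := ν) univ) (Measure.sub_le (μ := ν) (ν := μ) univ)

lemma etv_lt_top (μ ν : Measure α) [IsFiniteMeasure μ] [IsFiniteMeasure ν] : etv μ ν < ∞ :=
  (etv_le_add μ ν).trans_lt (ENNReal.add_lt_top.mpr ⟨measure_lt_top _ _, measure_lt_top _ _⟩)

lemma etv_triangle (μ ν ξ : Measure α) [IsFiniteMeasure μ] [IsFiniteMeasure ν]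
    [IsFiniteMeasure ξ] : etv μ ξ ≤ etv μ ν + etv ν ξ := by
  unfold etv
  calc (μ - ξ) univ + (ξ - μ) univ
      ≤ ((μ - ν) univ + (ν - ξ) univ) + ((ξ - ν) univ + (ν - μ) univ) :=
        add_le_add (Measure.sub_apply_univ_le_sub_apply_univ_add _ _ _)
          (Measure.sub_apply_univ_le_sub_apply_univ_add _ _ _)
    _ = _ := by ring

lemma measurable_etv [CountablyGenerated α] {κ : β → Measure α} [∀ b, IsFiniteMeasure (κ b)]
    (hκ : Measurable κ) (ν : Measure α) [IsFiniteMeasure ν] :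
    Measurable fun b => etv (κ b) ν := by
  have := (countable_generateSetAlgebra (countable_countableGeneratingSet (α := α))).to_subtype
  have hA (A : generateSetAlgebra (countableGeneratingSet α)) :
      Measurable fun b => κ b A :=
    (Measure.measurable_coe (Measure.measurableSet_of_mem_generateSetAlgebra
      (fun _ => measurableSet_countableGeneratingSet) A.2)).comp hκ
  simp_rw [etv, Measure.sub_apply_univ_eq_iSup]
  exact (Measurable.iSup fun A => (hA A).sub measurable_const).add
    (Measurable.iSup fun A => measurable_const.sub (hA A))

lemma etv_bind_le (ρ : Measure β) [IsProbabilityMeasure ρ] {κ : β → Measure α}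
    [∀ b, IsProbabilityMeasure (κ b)] (hκ : Measurable κ) (ν : Measure α) [IsFiniteMeasure ν] :
    etv (ρ.bind κ) ν ≤ ∫⁻ b, etv (κ b) ν ∂ρ :=
  (add_le_add (Measure.bind_sub_apply_univ_le ρ hκ ν) (Measure.sub_bind_apply_univ_le ρ hκ ν)).trans
    (le_lintegral_add _ _)

end etv

section translation

variable {M : Type*} [Monoid M] [MeasurableSpace M]

lemma mconv_eq_measure_mconv (μ ν : Measure M) : mconv μ ν = μ ∗ₘ ν := rfl

variable [MeasurableMul₂ M]

instance isProbabilityMeasure_mconv (μ ν : Measure M) [IsProbabilityMeasure μ]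
    [IsProbabilityMeasure ν] : IsProbabilityMeasure (mconv μ ν) :=
  inferInstanceAs (IsProbabilityMeasure (μ ∗ₘ ν))

instance isFiniteMeasure_ltrans (g : M) (θ : Measure M) [IsFiniteMeasure θ] :
    IsFiniteMeasure (ltrans g θ) :=
  inferInstanceAs (IsFiniteMeasure (θ.map _))

instance isProbabilityMeasure_ltrans (g : M) (θ : Measure M) [IsProbabilityMeasure θ] :
    IsProbabilityMeasure (ltrans g θ) :=
  Measure.isProbabilityMeasure_map (measurable_const_mul g).aemeasurable

lemma ltrans_apply_univ (g : M) (θ : Measure M) : ltrans g θ univ = θ univ := by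
  rw [ltrans, Measure.map_apply (measurable_const_mul g) .univ, preimage_univ]

lemma ltrans_eq_dirac_mconv (g : M) (θ : Measure M) [SFinite θ] :
    ltrans g θ = Measure.dirac g ∗ₘ θ :=
  (Measure.dirac_mconv g θ).symm

lemma lintegral_ltrans (g : M) (φ : Measure M) {f : M → ℝ≥0∞} (hf : Measurable f) :
    ∫⁻ h, f h ∂(ltrans g φ) = ∫⁻ h, f (g * h) ∂φ :=
  lintegral_map hf (measurable_const_mul g)

lemma measurable_ltrans (θ : Measure M) [SFinite θ] : Measurable fun g : M => ltrans g θ := by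
  refine Measure.measurable_of_measurable_coe _ fun s hs => ?_
  simp_rw [ltrans, Measure.map_apply (measurable_const_mul _) hs]
  exact measurable_measure_prodMk_left (measurable_mul hs)

lemma mconv_eq_bind (φ θ : Measure M) [SFinite θ] :
    mconv φ θ = φ.bind fun g => ltrans g θ := by
  refine Measure.ext_of_lintegral _ fun f hf => ?_
  rw [Measure.lintegral_bind (measurable_ltrans θ).aemeasurable hf.aemeasurable,
    mconv_eq_measure_mconv, Measure.lintegral_mconv hf]
  simp_rw [lintegral_ltrans _ θ hf]

lemma ltrans_mconv (g : M) (φ θ : Measure M) [SFinite φ] [SFinite θ] :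
    ltrans g (mconv φ θ) = mconv (ltrans g φ) θ := by
  simp only [ltrans_eq_dirac_mconv, mconv_eq_measure_mconv]
  exact (Measure.mconv_assoc _ _ _).symm

lemma etv_mconv_le (φ θ : Measure M) [IsProbabilityMeasure φ] [IsProbabilityMeasure θ] :
    etv (mconv φ θ) θ ≤ ∫⁻ h, etv (ltrans h θ) θ ∂φ :=
  mconv_eq_bind φ θ ▸ etv_bind_le φ (measurable_ltrans θ) θ

lemma lintegral_etv_ltrans_ne_top (m θ : Measure M) [IsFiniteMeasure m] [IsFiniteMeasure θ] :
    ∫⁻ g, etv (ltrans g θ) θ ∂m ≠ ∞ := by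
  refine ne_top_of_le_ne_top ?_
    (lintegral_mono fun g => (etv_le_add (ltrans g θ) θ).trans_eq (by rw [ltrans_apply_univ]))
  rw [lintegral_const]
  exact ENNReal.mul_ne_top (ENNReal.add_ne_top.mpr ⟨measure_ne_top _ _, measure_ne_top _ _⟩)
    (measure_ne_top _ _)

end translation

section discrepancy

variable {M : Type*} [Monoid M] [MeasurableSpace M] [MeasurableMul₂ M] [CountablyGenerated M]

lemma measurable_etv_ltrans (θ : Measure M) [IsFiniteMeasure θ] :
    Measurable fun g => etv (ltrans g θ) θ :=
  measurable_etv (measurable_ltrans θ) θ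

lemma disc_eq_toReal_lintegral (m θ : Measure M) [IsFiniteMeasure θ] :
    disc m θ = (∫⁻ g, etv (ltrans g θ) θ ∂m).toReal :=
  integral_toReal (measurable_etv_ltrans θ).aemeasurable (ae_of_all _ fun _ => etv_lt_top _ _)

lemma etv_ltrans_mconv_le (g : M) (φ θ : Measure M) [IsProbabilityMeasure φ]
    [IsProbabilityMeasure θ] :
    etv (ltrans g (mconv φ θ)) (mconv φ θ)
      ≤ ∫⁻ h, etv (ltrans (g * h) θ) θ ∂φ + ∫⁻ h, etv (ltrans h θ) θ ∂φ :=
  calc etv (ltrans g (mconv φ θ)) (mconv φ θ)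
      ≤ etv (ltrans g (mconv φ θ)) θ + etv θ (mconv φ θ) := etv_triangle _ _ _
    _ = etv (mconv (ltrans g φ) θ) θ + etv (mconv φ θ) θ := by rw [ltrans_mconv, etv_comm θ]
    _ ≤ ∫⁻ h, etv (ltrans h θ) θ ∂(ltrans g φ) + ∫⁻ h, etv (ltrans h θ) θ ∂φ :=
        add_le_add (etv_mconv_le _ _) (etv_mconv_le _ _)
    _ = _ := by rw [lintegral_ltrans g φ (measurable_etv_ltrans θ)]

lemma lintegral_etv_ltrans_mconv_le (m φ θ : Measure M) [IsProbabilityMeasure m]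
    [IsProbabilityMeasure φ] [IsProbabilityMeasure θ] :
    ∫⁻ g, etv (ltrans g (mconv φ θ)) (mconv φ θ) ∂m
      ≤ ∫⁻ g, etv (ltrans g θ) θ ∂(mconv m φ) + ∫⁻ g, etv (ltrans g θ) θ ∂φ :=
  calc ∫⁻ g, etv (ltrans g (mconv φ θ)) (mconv φ θ) ∂m
      ≤ ∫⁻ g, (∫⁻ h, etv (ltrans (g * h) θ) θ ∂φ + ∫⁻ h, etv (ltrans h θ) θ ∂φ) ∂m :=
        lintegral_mono fun g => etv_ltrans_mconv_le g φ θ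
    _ = _ := by
        rw [lintegral_add_right _ measurable_const, lintegral_const, measure_univ, mul_one,
          mconv_eq_measure_mconv, Measure.lintegral_mconv (measurable_etv_ltrans θ)]

end discrepancy

theorem stmt2_general {G : Type*} [TopologicalSpace G] [Group G] [IsTopologicalGroup G]
    [SecondCountableTopology G] [MeasurableSpace G] [BorelSpace G]
    (m φ θ : Measure G) (hm : IsProbabilityMeasure m) (hφ : IsProbabilityMeasure φ)
    (hθ : IsProbabilityMeasure θ) :
    disc m (mconv φ θ) ≤ disc (mconv m φ) θ + disc φ θ := by
  rw [disc_eq_toReal_lintegral, disc_eq_toReal_lintegral, disc_eq_toReal_lintegral]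
  exact ENNReal.toReal_le_add (lintegral_etv_ltrans_mconv_le m φ θ)
    (lintegral_etv_ltrans_ne_top _ θ) (lintegral_etv_ltrans_ne_top φ θ)

/-- For all probability measures `m`, `φ`, `θ` on `G`,
`Δ(m, φ * θ) ≤ Δ(m * φ, θ) + Δ(φ, θ)`. -/
theorem stmt2 {G : Type*} [TopologicalSpace G] [Group G] [IsTopologicalGroup G]
    [LocallyCompactSpace G] [SecondCountableTopology G] [MeasurableSpace G] [BorelSpace G]
    (m φ θ : Measure G) (hm : IsProbabilityMeasure m) (hφ : IsProbabilityMeasure φ)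
    (hθ : IsProbabilityMeasure θ) :
    disc m (mconv φ θ) ≤ disc (mconv m φ) θ + disc φ θ :=
  stmt2_general m φ θ hm hφ hθ
end

section
/- Let φ be an absolutely continuous system on (G, X) (i.e., φ^x ≺ λ for every x ∈ X) and let m be a probability measure on G × X with m ≺ λ ⊗ κ. Then mQ_φ ≺ λ ⊗ κ and m̄Q_φ ≺ λ ⊗ κ. -/
open MeasureTheory Filter Topology

/-- A system on `(G, X)`: a Markov kernel `x ↦ θ^x` from `X` to `G`, i.e. a measurable
family of Borel probability measures on `G`. -/
def IsSystem {G X : Type*} [MeasurableSpace G] [MeasurableSpace X] (θ : X → Measure G) : Prop :=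
  Measurable θ ∧ ∀ x, IsProbabilityMeasure (θ x)

/-- Discrepancy function of a system: `D_θ(g, x) = ‖g θ^{g⁻¹·x} − θ^x‖`. -/
noncomputable def Dsys {G X : Type*} [MeasurableSpace G] [Group G] [MulAction G X]
    (θ : X → Measure G) (p : G × X) : ℝ :=
  tv (ltrans p.1 (θ (p.1⁻¹ • p.2))) (θ p.2)

/-- Convolution of systems: `(θ⊛φ)^x = ∫_G g φ^{g⁻¹·x} dθ^x(g)`. -/
noncomputable def sconv {G X : Type*} [MeasurableSpace G] [Group G] [MulAction G X]
    (θ φ : X → Measure G) : X → Measure G :=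
  fun x => (θ x).bind fun g => ltrans g (φ (g⁻¹ • x))

/-- `k`-fold convolution power `θ^{⊛k}` of a system (with `θ^{⊛0} = δ_1` fibrewise). -/
noncomputable def sconvPow {G X : Type*} [MeasurableSpace G] [Group G] [MulAction G X]
    (θ : X → Measure G) : ℕ → X → Measure G
  | 0 => fun _ => Measure.dirac 1
  | (k + 1) => sconv θ (sconvPow θ k)

/-- Mean discrepancy `Δ(m, θ) = ∫_{G×X} D_θ dm` of a system against a measure on `G × X`. -/
noncomputable def sdisc {G X : Type*} [MeasurableSpace G] [MeasurableSpace X] [Group G]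
    [MulAction G X] (m : Measure (G × X)) (θ : X → Measure G) : ℝ :=
  ∫ p, Dsys θ p ∂m

/-- The measure `mQ_φ` on `G × X`:
`mQ_φ(A) = ∫_{G×X} ∫_G 1_A(g h, x) dφ^{g⁻¹·x}(h) dm(g, x)`. -/
noncomputable def mQ {G X : Type*} [MeasurableSpace G] [MeasurableSpace X] [Group G]
    [MulAction G X] (m : Measure (G × X)) (φ : X → Measure G) : Measure (G × X) :=
  m.bind fun p => (φ (p.1⁻¹ • p.2)).map fun h => (p.1 * h, p.2)

/-- The measure `m̄Q_φ` on `G × X`: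
`m̄Q_φ(A) = ∫_{G×X} ∫_G 1_A(h, x) dφ^{x}(h) dm(g, x)`. -/
noncomputable def mbarQ {G X : Type*} [MeasurableSpace G] [MeasurableSpace X] [Group G]
    (m : Measure (G × X)) (φ : X → Measure G) : Measure (G × X) :=
  m.bind fun p => (φ p.2).map fun h => (h, p.2)

/-!
Both measures are of the form `m.bind K` with `K p` the image of a measure `≪ λ` under
`h ↦ (h, p.2)`; for `mQ_φ` that measure is `p.1 φ^{p.1⁻¹ · p.2}`, which is `≪ λ` by left
invariance of `λ`. Such a `K p` charges no set whose section at `p.2` is `λ`-null. If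
`(λ ⊗ κ) s = 0`, Fubini makes the sections of `s` at `κ`-a.e. `x` null, and `m ≪ λ ⊗ κ` turns
"for `κ`-a.e. `x`" into "for `m`-a.e. `(g, x)`", so `m.bind K s = ∫ K p s ∂m = 0`.
-/

open ProbabilityTheory

namespace MeasureTheory.Measure

variable {α β : Type*} [MeasurableSpace α] [MeasurableSpace β] {μ : Measure α} {ν : Measure β}

lemma ae_measure_prodMk_right_preimage_eq_zero [SFinite μ] [SFinite ν] {s : Set (α × β)}
    (hs : MeasurableSet s) (h : μ.prod ν s = 0) : ∀ᵐ y ∂ν, μ ((·, y) ⁻¹' s) = 0 := by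
  have hswap : ν.prod μ (Prod.swap ⁻¹' s) = 0 := by
    rwa [measurePreserving_swap.measure_preimage hs.nullMeasurableSet]
  exact measure_ae_null_of_prod_null hswap

lemma bind_absolutelyContinuous_prod [SFinite μ] [SFinite ν] {m : Measure (α × β)}
    (hm : m ≪ μ.prod ν) {K : α × β → Measure (α × β)} (hK : Measurable K)
    (hK_null : ∀ p s, MeasurableSet s → μ ((·, p.2) ⁻¹' s) = 0 → K p s = 0) :
    m.bind K ≪ μ.prod ν := by
  refine AbsolutelyContinuous.mk fun s hs hs0 => ?_
  have hsec : ∀ᵐ p ∂m, μ ((·, p.2) ⁻¹' s) = 0 :=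
    hm.ae_le (quasiMeasurePreserving_snd.ae (ae_measure_prodMk_right_preimage_eq_zero hs hs0))
  rw [bind_apply hs hK.aemeasurable]
  refine (lintegral_congr_ae ?_).trans lintegral_zero
  filter_upwards [hsec] with p hp using hK_null p s hs hp

end MeasureTheory.Measure

lemma ProbabilityTheory.Kernel.measurable_map_uncurry {α β γ : Type*} [MeasurableSpace α]
    [MeasurableSpace β] [MeasurableSpace γ] (η : Kernel α β) [IsSFiniteKernel η]
    {f : α → β → γ} (hf : Measurable (Function.uncurry f)) :
    Measurable fun a => (η a).map (f a) := by
  have hfa (a : α) : Measurable (f a) := hf.comp measurable_prodMk_left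
  refine Measure.measurable_of_measurable_coe _ fun s hs => ?_
  simp_rw [Measure.map_apply (hfa _) hs]
  exact Kernel.measurable_kernel_prodMk_left (hf hs)

lemma MeasureTheory.Measure.bind_map_prodMk_absolutelyContinuous {α β : Type*}
    [MeasurableSpace α] [MeasurableSpace β] {μ : Measure α} {ν : Measure β} [SFinite μ]
    [SFinite ν] {m : Measure (α × β)} (hm : m ≪ μ.prod ν) (η : Kernel (α × β) α)
    [IsSFiniteKernel η] {f : α × β → α → α} (hf : Measurable (Function.uncurry f))
    (hημ : ∀ p, (η p).map (f p) ≪ μ) :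
    (m.bind fun p => (η p).map fun a => (f p a, p.2)) ≪ μ.prod ν := by
  have hfa (p : α × β) : Measurable (f p) := hf.comp measurable_prodMk_left
  refine bind_absolutelyContinuous_prod hm
    (Kernel.measurable_map_uncurry η (hf.prodMk measurable_fst.snd)) fun p s hs hs0 => ?_
  have hsec : MeasurableSet ((·, p.2) ⁻¹' s) := measurable_prodMk_right hs
  have hs0' := hημ p hs0
  rw [map_apply (hfa p) hsec] at hs0'
  rwa [map_apply ((hfa p).prodMk measurable_const) hs]

def IsSystem.kernel {G X : Type*} [MeasurableSpace G] [MeasurableSpace X] {θ : X → Measure G}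
    (hθ : IsSystem θ) : Kernel X G :=
  ⟨θ, hθ.1⟩

instance {G X : Type*} [MeasurableSpace G] [MeasurableSpace X] {θ : X → Measure G}
    (hθ : IsSystem θ) : IsMarkovKernel hθ.kernel :=
  ⟨hθ.2⟩

theorem stmt11_general {G X : Type*} [TopologicalSpace G] [Group G] [IsTopologicalGroup G]
    [LocallyCompactSpace G] [SecondCountableTopology G] [MeasurableSpace G] [BorelSpace G]
    [MeasurableSpace X] [MulAction G X] [MeasurableSMul₂ G X]
    (lam : Measure G) (hlam : lam.IsHaarMeasure)
    (κ : Measure X) (hκ : SigmaFinite κ)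
    (φ : X → Measure G) (hφ : IsSystem φ) (hφac : ∀ x, φ x ≪ lam)
    (m : Measure (G × X)) (hmac : m ≪ lam.prod κ) :
    mQ m φ ≪ lam.prod κ ∧ mbarQ m φ ≪ lam.prod κ := by
  have hmQ : mQ m φ ≪ lam.prod κ := by
    refine Measure.bind_map_prodMk_absolutelyContinuous hmac
      (hφ.kernel.comap (fun p : G × X => p.1⁻¹ • p.2) (by fun_prop))
      (f := fun p h => p.1 * h) (by fun_prop) fun p => ?_
    rw [← map_mul_left_eq_self lam p.1]
    exact (hφac _).map (measurable_const_mul p.1)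
  have hmbarQ : mbarQ m φ ≪ lam.prod κ :=
    Measure.bind_map_prodMk_absolutelyContinuous hmac (hφ.kernel.comap Prod.snd measurable_snd)
      (f := fun _ h => h) measurable_snd fun p => by
        rw [Measure.map_id']
        exact hφac p.2
  exact ⟨hmQ, hmbarQ⟩

/-- If `φ` is an absolutely continuous system on `(G, X)` (i.e. `φ^x ≺ λ`
for every `x`) and `m` is a probability measure on `G × X` with `m ≺ λ ⊗ κ`, then
`mQ_φ ≺ λ ⊗ κ` and `m̄Q_φ ≺ λ ⊗ κ`. -/
theorem stmt11 {G X : Type*} [TopologicalSpace G] [Group G] [IsTopologicalGroup G]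
    [LocallyCompactSpace G] [SecondCountableTopology G] [MeasurableSpace G] [BorelSpace G]
    [MeasurableSpace X] [StandardBorelSpace X] [MulAction G X] [MeasurableSMul₂ G X]
    (lam : Measure G) (hlam : lam.IsHaarMeasure)
    (κ : Measure X) (hκ : SigmaFinite κ)
    (φ : X → Measure G) (hφ : IsSystem φ) (hφac : ∀ x, φ x ≪ lam)
    (m : Measure (G × X)) (hm : IsProbabilityMeasure m) (hmac : m ≪ lam.prod κ) :
    mQ m φ ≪ lam.prod κ ∧ mbarQ m φ ≪ lam.prod κ :=
  stmt11_general lam hlam κ hκ φ hφ hφac m hmac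
end
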